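/- arXiv:2211.13248 — 4 statements merged into one kernel-verified Lean document; each statement's English description precedes it below -/
import Mathlib

section
/- Conversely, if the origin lies in the interior of the convex hull of the image of a continuous curve T : [0, s_f] → S², i.e., there exists a continuous positive weight λ : [0,s_f] → ℝ with λ(s) > 0 for all s, ∫₀^{s_f} λ(s) ds = 1, and ∫₀^{s_f} λ(s) T(s) ds = 0, then for any T > 0 the reparameterization defined by dt/ds = T·λ(s) yields a curve R(t) = ∫₀^T T(s(t)) dt with R(T) = 0 (a closed space curve). -/
open intervalIntegral Set MeasureTheory

/-
With `f u = Tf * ∫₀ᵘ λ`, the substitution `t = f u` turns `∫₀^Tf T(s t) dt` into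
`∫₀^sf f'(u) T(s (f u)) du = Tf * ∫₀^sf λ(u) T(u) du`, which vanishes by assumption.
-/

theorem MeasureTheory.setIntegral_comp_leftInvOn_eq_integral_deriv_smul
    {E : Type*} [NormedAddCommGroup E] [NormedSpace ℝ E] {f f' g : ℝ → ℝ} {a b : ℝ}
    (hab : a ≤ b) (hf : ContinuousOn f (Icc a b))
    (hff' : ∀ x ∈ Ioo a b, HasDerivAt f (f' x) x) (hf' : ∀ x ∈ Ioo a b, 0 ≤ f' x)
    (hg : LeftInvOn g f (Icc a b)) (F : ℝ → E) :
    ∫ u in Icc (f a) (f b), F (g u) = ∫ x in Icc a b, f' x • F x := by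
  rw [← integral_Icc_deriv_smul_of_deriv_nonneg hf hff' hf' hab]
  exact setIntegral_congr_fun measurableSet_Icc fun x hx => by rw [hg hx]

theorem stmt_1_general (sf Tf : ℝ) (hsf : 0 < sf) (hTf : 0 < Tf)
    (T : ℝ → (Fin 3 → ℝ))
    (lam : ℝ → ℝ) (hlamcont : Continuous lam)
    (hlampos : ∀ u ∈ Icc (0:ℝ) sf, 0 < lam u)
    (hlamnorm : ∫ u in (0:ℝ)..sf, lam u = 1)
    (hzero : ∫ u in (0:ℝ)..sf, lam u • T u = 0)
    (s : ℝ → ℝ)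
    (hinv : ∀ u ∈ Icc (0:ℝ) sf, s (Tf * ∫ v in (0:ℝ)..u, lam v) = u) :
    ∫ t in (0:ℝ)..Tf, T (s t) = 0 := by
  set f : ℝ → ℝ := fun u => Tf * ∫ v in (0:ℝ)..u, lam v
  have hf : ∀ u, HasDerivAt f (Tf * lam u) u := fun u =>
    (integral_hasDerivAt_right (hlamcont.intervalIntegrable _ _)
      (hlamcont.stronglyMeasurableAtFilter _ _) hlamcont.continuousAt).const_mul Tf
  have hcov := setIntegral_comp_leftInvOn_eq_integral_deriv_smul hsf.le
    (fun u _ => (hf u).continuousAt.continuousWithinAt) (fun u _ => hf u)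
    (fun u hu => (mul_pos hTf (hlampos u (Ioo_subset_Icc_self hu))).le) hinv T
  have hf0 : f 0 = 0 := by simp [f]
  have hfsf : f sf = Tf := by simp [f, hlamnorm]
  calc ∫ t in (0:ℝ)..Tf, T (s t) = ∫ t in Icc 0 Tf, T (s t) := by
        rw [integral_of_le hTf.le, integral_Icc_eq_integral_Ioc]
    _ = ∫ u in Icc 0 sf, Tf • (lam u • T u) := by
        simpa only [hf0, hfsf, mul_smul] using hcov
    _ = Tf • ∫ u in (0:ℝ)..sf, lam u • T u := by
        rw [integral_of_le hsf.le, ← integral_Icc_eq_integral_Ioc,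
          MeasureTheory.integral_smul]
    _ = 0 := by rw [hzero, smul_zero]

/-- if the origin is in the interior of the convex hull of the
spherical curve `T`, witnessed by a continuous positive weight `lam`, then the
reparameterization `s` inverse to `t(s) = Tf·∫₀ˢ lam` yields a closed space
curve: `∫₀^{Tf} T(s(t)) dt = 0`. -/
theorem stmt_1 (sf Tf : ℝ) (hsf : 0 < sf) (hTf : 0 < Tf)
    (T : ℝ → (Fin 3 → ℝ)) (hTcont : ContinuousOn T (Icc 0 sf))
    (hTunit : ∀ u ∈ Icc (0:ℝ) sf, (T u 0)^2 + (T u 1)^2 + (T u 2)^2 = 1)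
    (lam : ℝ → ℝ) (hlamcont : Continuous lam)
    (hlampos : ∀ u ∈ Icc (0:ℝ) sf, 0 < lam u)
    (hlamnorm : ∫ u in (0:ℝ)..sf, lam u = 1)
    (hzero : ∫ u in (0:ℝ)..sf, lam u • T u = 0)
    (s : ℝ → ℝ) (hmaps : MapsTo s (Icc 0 Tf) (Icc 0 sf))
    (hinv : ∀ u ∈ Icc (0:ℝ) sf, s (Tf * ∫ v in (0:ℝ)..u, lam v) = u) :
    ∫ t in (0:ℝ)..Tf, T (s t) = 0 :=
  stmt_1_general sf Tf hsf hTf T lam hlamcont hlampos hlamnorm hzero s hinv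
end

section
/- For the specific curve r(λ) = (sin(λ/2), sin(λ)cos²(λ), sin(λ)) on [0, 4π], the curve is closed (r(4π) = r(0) = 0), and the swept area of its derivative vanishes: ∫₀^{4π} r'(λ) × r''(λ) dλ = 0. -/
open intervalIntegral Set Real

/-- Cross product in ℝ³. -/
def cross3 (v w : Fin 3 → ℝ) : Fin 3 → ℝ :=
  ![v 1 * w 2 - v 2 * w 1, v 2 * w 0 - v 0 * w 2, v 0 * w 1 - v 1 * w 0]

/-! The curve is odd under the reflection `λ ↦ 4π - λ`. Differentiating, `r'` is even and `r''`
is odd under it, so `r' × r''` is odd about `2π` and its integral over `[0, 4π]` vanishes.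
No derivative is ever computed: `deriv` commutes with `x ↦ c - x` even at non-differentiable
points. -/

section Reflection

variable {E : Type*} [NormedAddCommGroup E] [NormedSpace ℝ E] {f : ℝ → E} {c : ℝ}

theorem deriv_const_sub_eq_of_odd (h : ∀ x, f (c - x) = -f x) (x : ℝ) :
    deriv f (c - x) = deriv f x := by
  have hderiv := deriv_comp_const_sub (f := f) (a := c) (x := x)
  rw [funext h, deriv.fun_neg] at hderiv
  exact (neg_inj.mp hderiv).symm

theorem deriv_const_sub_eq_neg_of_even (h : ∀ x, f (c - x) = f x) (x : ℝ) :
    deriv f (c - x) = -deriv f x := by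
  have hderiv := deriv_comp_const_sub (f := f) (a := c) (x := x)
  rw [funext h] at hderiv
  exact neg_eq_iff_eq_neg.mp hderiv.symm

theorem intervalIntegral.integral_eq_zero_of_odd_reflection {a b : ℝ}
    (h : ∀ x, f (a + b - x) = -f x) : ∫ x in a..b, f x = 0 := by
  have hsymm : ∫ x in a..b, f x = -∫ x in a..b, f x := by
    calc ∫ x in a..b, f x = ∫ x in a..b, f (a + b - x) := by
          rw [integral_comp_sub_left]; congr 1 <;> ring
      _ = -∫ x in a..b, f x := by simp_rw [h, integral_neg]
  have htwice : (2 : ℝ) • ∫ x in a..b, f x = 0 := by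
    rw [two_smul]; nth_rewrite 2 [hsymm]; exact add_neg_cancel _
  exact (smul_eq_zero.mp htwice).resolve_left two_ne_zero

end Reflection

theorem cross3_neg_right (v w : Fin 3 → ℝ) : cross3 v (-w) = -cross3 v w := by
  ext i; fin_cases i <;> simp [cross3, add_comm, sub_eq_add_neg]

noncomputable def parityCurve (l : ℝ) : Fin 3 → ℝ := ![sin (l / 2), sin l * cos l ^ 2, sin l]

theorem parityCurve_four_pi_sub (l : ℝ) : parityCurve (4 * π - l) = -parityCurve l := by
  have hfour : 4 * π = (2 : ℕ) * (2 * π) := by push_cast; ring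
  have hhalf : (4 * π - l) / 2 = 2 * π - l / 2 := by ring
  rw [parityCurve, parityCurve, hhalf, sin_two_pi_sub, hfour, sin_nat_mul_two_pi_sub,
    cos_nat_mul_two_pi_sub]
  ext i; fin_cases i <;> simp

/-- the parity curve `r(λ) = (sin(λ/2), sin λ cos²λ, sin λ)` on
`[0, 4π]` is closed with `r(4π) = r(0) = 0`, and the swept area of its
derivative vanishes. -/
theorem stmt_5 (r : ℝ → (Fin 3 → ℝ))
    (hr : ∀ l : ℝ, r l = ![Real.sin (l/2), Real.sin l * (Real.cos l)^2, Real.sin l]) :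
    r (4*π) = r 0 ∧ r 0 = 0 ∧
      ∫ l in (0:ℝ)..(4*π), cross3 (deriv r l) (deriv (deriv r) l) = 0 := by
  have hodd (l : ℝ) : r (4 * π - l) = -r l := by
    rw [hr, hr]; exact parityCurve_four_pi_sub l
  have hzero : r 0 = 0 := by
    rw [hr]; ext i; fin_cases i <;> simp
  refine ⟨by rw [← sub_zero (4 * π), hodd, hzero, neg_zero], hzero, ?_⟩
  have hr' := deriv_const_sub_eq_of_odd hodd
  refine integral_eq_zero_of_odd_reflection fun l => ?_
  rw [zero_add, hr', deriv_const_sub_eq_neg_of_even hr', cross3_neg_right]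
end

section
/- The tangent curve T(t) = (¼(√2 cos 2t − 2 cos t), −¼(√2 sin 2t + 2 sin t), ½√(√2 cos 3t + 5/2)) for t ∈ [0, 2π] is a unit-speed-normalized tangent (‖T(t)‖ = 1 for all t) and satisfies the zero-swept-area condition ∫₀^{2π} T(t) × T'(t) dt = 0, but the corresponding space curve is not closed: ∫₀^{2π} T(t) dt ≠ 0. -/
/-! Shifting `t` by `2π/3` rotates the tangent `T`, and hence `T'`, by `2π/3` about the
`z`-axis. Such rotations commute with the cross product, and integrals over a full period are
invariant under shifts, so `∫ T × T'` is fixed by the rotation and therefore lies on the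
`z`-axis; its `z`-component is `∫ (√2/8) cos 3t = 0`. The `z`-component of `∫ T` integrates a
positive function. -/

open intervalIntegral Set Real

open Function MeasureTheory

section Equivariance

variable {E : Type*} [NormedAddCommGroup E] [NormedSpace ℝ E]
  {F : ℝ → E} {L : E →L[ℝ] E} {ω : ℝ}

theorem Function.Periodic.deriv {c : ℝ} (hF : Periodic F c) : Periodic (_root_.deriv F) c :=
  fun t => by rw [← deriv_comp_add_const, hF.funext]

theorem deriv_add_eq_map_deriv (hL : ∀ t, F (t + ω) = L (F t)) {t : ℝ}
    (hF : DifferentiableAt ℝ F t) : deriv F (t + ω) = L (deriv F t) := by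
  rw [← deriv_comp_add_const, funext hL]
  exact (L.hasFDerivAt.comp_hasDerivAt t hF.hasDerivAt).deriv

theorem Function.Periodic.isFixedPt_intervalIntegral [CompleteSpace E] {T : ℝ}
    (hF : Periodic F T) (hL : ∀ t, F (t + ω) = L (F t)) (hFi : IntervalIntegrable F volume 0 T) :
    IsFixedPt L (∫ t in 0..T, F t) := by
  rw [IsFixedPt, ← L.intervalIntegral_comp_comm hFi, ← funext hL, integral_comp_add_right,
    zero_add, add_comm, hF.intervalIntegral_add_eq ω 0, zero_add]

end Equivariance

theorem intervalIntegral_apply {ι : Type*} [Fintype ι] {f : ℝ → ι → ℝ} {a b : ℝ}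
    (hf : IntervalIntegrable f volume a b) (i : ι) :
    (∫ t in a..b, f t) i = ∫ t in a..b, f t i :=
  ((ContinuousLinearMap.proj (R := ℝ) i).intervalIntegral_comp_comm hf).symm

noncomputable def rotZ (θ : ℝ) : (Fin 3 → ℝ) →L[ℝ] Fin 3 → ℝ :=
  LinearMap.toContinuousLinearMap (Matrix.toLin' !![cos θ, -sin θ, 0; sin θ, cos θ, 0; 0, 0, 1])

theorem rotZ_apply (θ : ℝ) (v : Fin 3 → ℝ) :
    rotZ θ v = ![cos θ * v 0 - sin θ * v 1, sin θ * v 0 + cos θ * v 1, v 2] := by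
  ext i; fin_cases i <;> simp [rotZ, Matrix.mulVec, dotProduct, Fin.sum_univ_three]; ring

theorem cross3_rotZ (θ : ℝ) (v w : Fin 3 → ℝ) :
    cross3 (rotZ θ v) (rotZ θ w) = rotZ θ (cross3 v w) := by
  have h := cos_sq_add_sin_sq θ
  ext i; fin_cases i
  · simp [rotZ_apply, cross3]; ring
  · simp [rotZ_apply, cross3]; ring
  · simp [rotZ_apply, cross3]; linear_combination (v 0 * w 1 - v 1 * w 0) * h

theorem eq_zero_of_isFixedPt_rotZ {θ : ℝ} (hθ : cos θ ≠ 1) {v : Fin 3 → ℝ}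
    (hv : IsFixedPt (rotZ θ) v) : v 0 = 0 ∧ v 1 = 0 := by
  have h0 := congrFun hv 0
  have h1 := congrFun hv 1
  simp [rotZ_apply] at h0 h1
  have hne : (cos θ - 1) ^ 2 + sin θ ^ 2 ≠ 0 := by
    have := sub_ne_zero.2 hθ; positivity
  refine ⟨(mul_eq_zero.1 ?_).resolve_left hne, (mul_eq_zero.1 ?_).resolve_left hne⟩
  · linear_combination (cos θ - 1) * h0 + sin θ * h1
  · linear_combination -sin θ * h0 + (cos θ - 1) * h1

noncomputable def tangent (t : ℝ) : Fin 3 → ℝ :=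
  ![(1/4) * (√2 * cos (2*t) - 2 * cos t),
    -(1/4) * (√2 * sin (2*t) + 2 * sin t),
    (1/2) * √(√2 * cos (3*t) + 5/2)]

theorem tangent_radicand_pos (t : ℝ) : 0 < √2 * cos (3*t) + 5/2 := by
  have h2 : √2 ^ 2 = 2 := sq_sqrt zero_le_two
  nlinarith [sqrt_nonneg 2, neg_one_le_cos (3*t)]

theorem tangent_norm_sq (t : ℝ) : tangent t 0 ^ 2 + tangent t 1 ^ 2 + tangent t 2 ^ 2 = 1 := by
  have h3 : cos (3*t) = cos (2*t) * cos t - sin (2*t) * sin t := by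
    rw [← cos_add]; ring_nf
  simp [tangent, mul_pow, sq_sqrt (tangent_radicand_pos t).le]
  linear_combination (1/8) * sin_sq_add_cos_sq (2*t) + (1/4) * sin_sq_add_cos_sq t
    + (√2/4) * h3 + (cos (2*t) ^ 2 + sin (2*t) ^ 2) / 16 * sq_sqrt zero_le_two

theorem tangent_periodic : Periodic tangent (2*π) := by
  intro t
  have h2 : 2 * (t + 2*π) = 2*t + 2*π + 2*π := by ring
  have h3 : 3 * (t + 2*π) = 3*t + 2*π + 2*π + 2*π := by ring
  simp only [tangent, h2, h3, cos_add_two_pi, sin_add_two_pi]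

theorem cos_two_pi_div_three : cos (2*π/3) = -1/2 := by
  rw [show 2*π/3 = π - π/3 by ring, cos_pi_sub, cos_pi_div_three]; ring

theorem sin_two_pi_div_three : sin (2*π/3) = √3/2 := by
  rw [show 2*π/3 = π - π/3 by ring, sin_pi_sub, sin_pi_div_three]

theorem tangent_add_two_pi_div_three (t : ℝ) :
    tangent (t + 2*π/3) = rotZ (2*π/3) (tangent t) := by
  have h2 : 2 * (t + 2*π/3) = 2*t - 2*π/3 + 2*π := by ring
  have h3 : 3 * (t + 2*π/3) = 3*t + 2*π := by ring
  rw [rotZ_apply]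
  ext i; fin_cases i <;>
    simp [tangent, h2, h3, cos_add, sin_add, cos_sub, sin_sub, cos_two_pi_div_three,
      sin_two_pi_div_three] <;> ring

theorem contDiff_tangent : ContDiff ℝ 1 tangent := by
  refine contDiff_pi.2 fun i => ?_
  fin_cases i
  · simp [tangent]; fun_prop
  · simp [tangent]; fun_prop
  · simp [tangent]
    exact contDiff_const.mul
      ((by fun_prop : ContDiff ℝ 1 _).sqrt fun t => (tangent_radicand_pos t).ne')

theorem hasDerivAt_tangent_zero (t : ℝ) :
    HasDerivAt (fun t => tangent t 0) ((1/4) * (-(2*√2) * sin (2*t) + 2 * sin t)) t := by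
  have h := ((((hasDerivAt_id t).const_mul 2).cos.const_mul √2).sub
    ((hasDerivAt_cos t).const_mul 2)).const_mul (1/4 : ℝ)
  exact h.congr_deriv (by simp; ring)

theorem hasDerivAt_tangent_one (t : ℝ) :
    HasDerivAt (fun t => tangent t 1) (-(1/4) * (2*√2 * cos (2*t) + 2 * cos t)) t := by
  have h := ((((hasDerivAt_id t).const_mul 2).sin.const_mul √2).add
    ((hasDerivAt_sin t).const_mul 2)).const_mul (-(1/4) : ℝ)
  exact h.congr_deriv (by simp; ring)

theorem cross3_tangent_deriv_two (t : ℝ) :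
    cross3 (tangent t) (deriv tangent t) 2 = √2/8 * cos (3*t) := by
  have hd := contDiff_tangent.differentiable one_ne_zero
  have h3 : cos (3*t) = cos (2*t) * cos t - sin (2*t) * sin t := by
    rw [← cos_add]; ring_nf
  rw [deriv_pi fun i => differentiable_pi.1 hd i t]
  simp only [cross3, Matrix.cons_val_two, Matrix.tail_cons, Matrix.head_cons,
    (hasDerivAt_tangent_zero t).deriv, (hasDerivAt_tangent_one t).deriv]
  simp [tangent]
  linear_combination (-(1/4)) * sin_sq_add_cos_sq (2*t) + (1/4) * sin_sq_add_cos_sq t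
    - (√2/8) * h3 - (cos (2*t) ^ 2 + sin (2*t) ^ 2) / 8 * sq_sqrt zero_le_two

theorem integral_cross3_tangent_deriv :
    ∫ t in 0..2*π, cross3 (tangent t) (deriv tangent t) = 0 := by
  set G := fun t => cross3 (tangent t) (deriv tangent t)
  have hd := contDiff_tangent.differentiable one_ne_zero
  have hG : Continuous G := by
    have := contDiff_tangent.continuous
    have := contDiff_tangent.continuous_deriv le_rfl
    unfold G cross3; fun_prop
  have hG_per : Periodic G (2*π) := fun t => by
    simp only [G, tangent_periodic t, tangent_periodic.deriv t]
  have hG_rot (t : ℝ) : G (t + 2*π/3) = rotZ (2*π/3) (G t) := by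
    simp only [G, tangent_add_two_pi_div_three,
      deriv_add_eq_map_deriv tangent_add_two_pi_div_three (hd t), cross3_rotZ]
  obtain ⟨h0, h1⟩ := eq_zero_of_isFixedPt_rotZ (by rw [cos_two_pi_div_three]; norm_num)
    (hG_per.isFixedPt_intervalIntegral hG_rot (hG.intervalIntegrable _ _))
  ext i; fin_cases i
  · exact h0
  · exact h1
  · have : sin (3 * (2*π)) = 0 := by
      rw [show (3:ℝ) * (2*π) = (6:ℕ) * π by push_cast; ring, sin_nat_mul_pi]
    simp [intervalIntegral_apply (hG.intervalIntegrable _ _), G, cross3_tangent_deriv_two,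
      integral_comp_mul_left, this]

theorem integral_tangent_two_pos : 0 < (∫ t in 0..2*π, tangent t) 2 := by
  rw [intervalIntegral_apply (contDiff_tangent.continuous.intervalIntegrable _ _)]
  refine intervalIntegral_pos_of_pos
    (((continuous_apply 2).comp contDiff_tangent.continuous).intervalIntegrable _ _)
    (fun t => by simpa [tangent] using tangent_radicand_pos t) two_pi_pos

/-- the tangent curve of Eq. (non-closed) is unit norm and sweeps
zero area, but the corresponding space curve is not closed. -/
theorem stmt_7 (T : ℝ → (Fin 3 → ℝ))
    (hT : ∀ t : ℝ, T t =
      ![(1/4) * (Real.sqrt 2 * Real.cos (2*t) - 2 * Real.cos t),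
        -(1/4) * (Real.sqrt 2 * Real.sin (2*t) + 2 * Real.sin t),
        (1/2) * Real.sqrt (Real.sqrt 2 * Real.cos (3*t) + 5/2)]) :
    (∀ t : ℝ, (T t 0)^2 + (T t 1)^2 + (T t 2)^2 = 1) ∧
    (∫ t in (0:ℝ)..(2*π), cross3 (T t) (deriv T t) = 0) ∧
    (∫ t in (0:ℝ)..(2*π), T t) ≠ 0 := by
  obtain rfl : T = tangent := funext hT
  exact ⟨tangent_norm_sq, integral_cross3_tangent_deriv,
    fun h => integral_tangent_two_pos.ne' (by rw [h]; rfl)⟩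
end

section
/- The tangent curve T(t) = (sin t cos 2t, sin t sin 2t, cos t) for t ∈ [0, 2π] is unit norm, satisfies the closure condition ∫₀^{2π} T(t) dt = 0, but does not satisfy the zero-swept-area condition: ∫₀^{2π} T(t) × T'(t) dt ≠ 0. -/
open intervalIntegral Set Real

theorem intervalIntegral_eval {ι : Type*} [Fintype ι] {E : ι → Type*}
    [∀ i, NormedAddCommGroup (E i)] [∀ i, NormedSpace ℝ (E i)] [∀ i, CompleteSpace (E i)]
    {f : ℝ → ∀ i, E i} {a b : ℝ} (hf : IntervalIntegrable f MeasureTheory.volume a b) (i : ι) :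
    (∫ t in a..b, f t) i = ∫ t in a..b, f t i :=
  ((ContinuousLinearMap.proj (R := ℝ) (φ := E) i).intervalIntegral_comp_comm hf).symm

theorem integral_sin_nat_mul_zero_two_pi (n : ℕ) : ∫ t in (0:ℝ)..2 * π, sin (n * t) = 0 := by
  rcases eq_or_ne n 0 with rfl | hn
  · simp
  · simp [integral_comp_mul_left (fun t => sin t) (Nat.cast_ne_zero.mpr hn), cos_nat_mul_two_pi]

theorem integral_cos_nat_mul_zero_two_pi {n : ℕ} (hn : n ≠ 0) :
    ∫ t in (0:ℝ)..2 * π, cos (n * t) = 0 := by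
  have h : sin (n * 2 * π) = 0 := by exact_mod_cast sin_nat_mul_pi (n * 2)
  simp [integral_comp_mul_left (fun t => cos t) (Nat.cast_ne_zero.mpr hn), ← mul_assoc, h]

theorem integral_sin_mul_cos_two_mul : ∫ t in (0:ℝ)..2 * π, sin t * cos (2 * t) = 0 := by
  have h (t : ℝ) : sin t * cos (2 * t) = (sin ((3 : ℕ) * t) - sin ((1 : ℕ) * t)) / 2 := by
    rw [show ((3 : ℕ) : ℝ) * t = 2 * t + t by push_cast; ring,
      show ((1 : ℕ) : ℝ) * t = 2 * t - t by push_cast; ring, sin_add, sin_sub]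
    ring
  simp only [h]
  rw [integral_div, integral_sub (Continuous.intervalIntegrable (by fun_prop) _ _)
    (Continuous.intervalIntegrable (by fun_prop) _ _), integral_sin_nat_mul_zero_two_pi,
    integral_sin_nat_mul_zero_two_pi, sub_zero, zero_div]

theorem integral_sin_mul_sin_two_mul : ∫ t in (0:ℝ)..2 * π, sin t * sin (2 * t) = 0 := by
  have h (t : ℝ) : sin t * sin (2 * t) = (cos ((1 : ℕ) * t) - cos ((3 : ℕ) * t)) / 2 := by
    rw [show ((3 : ℕ) : ℝ) * t = 2 * t + t by push_cast; ring,
      show ((1 : ℕ) : ℝ) * t = 2 * t - t by push_cast; ring, cos_add, cos_sub]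
    ring
  simp only [h]
  rw [integral_div, integral_sub (Continuous.intervalIntegrable (by fun_prop) _ _)
    (Continuous.intervalIntegrable (by fun_prop) _ _),
    integral_cos_nat_mul_zero_two_pi one_ne_zero, integral_cos_nat_mul_zero_two_pi three_ne_zero,
    sub_zero, zero_div]

noncomputable def tangentCurve (t : ℝ) : Fin 3 → ℝ :=
  ![sin t * cos (2 * t), sin t * sin (2 * t), cos t]

noncomputable def tangentCurveDeriv (t : ℝ) : Fin 3 → ℝ :=
  ![cos t * cos (2 * t) - 2 * sin t * sin (2 * t), cos t * sin (2 * t) + 2 * sin t * cos (2 * t),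
    -sin t]

theorem continuous_tangentCurve : Continuous tangentCurve := by
  unfold tangentCurve
  fun_prop

theorem hasDerivAt_tangentCurve (t : ℝ) : HasDerivAt tangentCurve (tangentCurveDeriv t) t := by
  have h2 : HasDerivAt (fun t : ℝ => 2 * t) 2 t := by simpa using (hasDerivAt_id t).const_mul 2
  refine hasDerivAt_pi.mpr fun i => ?_
  fin_cases i <;> simp only [tangentCurve, tangentCurveDeriv, Fin.zero_eta, Fin.mk_one,
    Fin.reduceFinMk, Fin.isValue, Matrix.cons_val_zero, Matrix.cons_val_one, Matrix.cons_val]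
  · exact ((hasDerivAt_sin t).mul h2.cos).congr_deriv (by ring)
  · exact ((hasDerivAt_sin t).mul h2.sin).congr_deriv (by ring)
  · exact hasDerivAt_cos t

theorem deriv_tangentCurve : deriv tangentCurve = tangentCurveDeriv :=
  funext fun t => (hasDerivAt_tangentCurve t).deriv

theorem tangentCurve_sq_add_sq_add_sq (t : ℝ) :
    tangentCurve t 0 ^ 2 + tangentCurve t 1 ^ 2 + tangentCurve t 2 ^ 2 = 1 := by
  simp only [tangentCurve, Fin.isValue, Matrix.cons_val_zero, Matrix.cons_val_one,
    Matrix.cons_val]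
  linear_combination sin t ^ 2 * sin_sq_add_cos_sq (2 * t) + sin_sq_add_cos_sq t

theorem integral_tangentCurve : ∫ t in (0:ℝ)..2 * π, tangentCurve t = 0 := by
  funext i
  rw [intervalIntegral_eval (continuous_tangentCurve.intervalIntegrable _ _), Pi.zero_apply]
  fin_cases i <;>
    simp [tangentCurve, integral_sin_mul_cos_two_mul, integral_sin_mul_sin_two_mul, integral_cos]

theorem cross3_tangentCurve_two (t : ℝ) :
    cross3 (tangentCurve t) (tangentCurveDeriv t) 2 = 2 * sin t ^ 2 := by
  simp only [cross3, tangentCurve, tangentCurveDeriv, Fin.isValue, Matrix.cons_val_zero,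
    Matrix.cons_val_one, Matrix.cons_val]
  linear_combination 2 * sin t ^ 2 * sin_sq_add_cos_sq (2 * t)

theorem integral_cross3_tangentCurve_two :
    (∫ t in (0:ℝ)..2 * π, cross3 (tangentCurve t) (tangentCurveDeriv t)) 2 = 2 * π := by
  have hcont : Continuous fun t => cross3 (tangentCurve t) (tangentCurveDeriv t) := by
    unfold cross3 tangentCurve tangentCurveDeriv
    fun_prop
  rw [intervalIntegral_eval (hcont.intervalIntegrable _ _)]
  simp [cross3_tangentCurve_two, integral_sin_sq]

/-- the tangent curve `T(t) = (sin t cos 2t, sin t sin 2t, cos t)`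
is unit norm, gives a closed space curve, but does not sweep zero area. -/
theorem stmt_8 (T : ℝ → (Fin 3 → ℝ))
    (hT : ∀ t : ℝ, T t =
      ![Real.sin t * Real.cos (2*t), Real.sin t * Real.sin (2*t), Real.cos t]) :
    (∀ t : ℝ, (T t 0)^2 + (T t 1)^2 + (T t 2)^2 = 1) ∧
    (∫ t in (0:ℝ)..(2*π), T t) = 0 ∧
    (∫ t in (0:ℝ)..(2*π), cross3 (T t) (deriv T t)) ≠ 0 := by
  obtain rfl : T = tangentCurve := funext hT
  refine ⟨tangentCurve_sq_add_sq_add_sq, integral_tangentCurve, fun h => ?_⟩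
  have h2 := congrFun h 2
  rw [deriv_tangentCurve, integral_cross3_tangentCurve_two, Pi.zero_apply] at h2
  exact two_pi_pos.ne' h2
end
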